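/- Let W: ℝ^d → ℝ ∪ {∞} be lower semicontinuous, bounded below, locally integrable, even, with lim_{|x|→∞} W(x) = W_∞ ∈ ℝ ∪ {∞}. Suppose R_* > 0 is an upper bound of minimizer size for W (any minimizer of the interaction energy E is compactly supported, and any minimizer ρ with center of mass 0 has support contained in the closed ball B(0;R_*)), and suppose the LIC radius of W satisfies R_LIC[W] > R_*. Then the minimizer of E over probability measures is unique up to translation. -/

import Mathlib

open MeasureTheory Real Filter Topology Metric Set
open scoped ENNReal

noncomputable section

/-- Send an extended real to `ℝ≥0∞` (keeping `⊤`, truncating negatives to `0`). -/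
def erealToENNReal (x : EReal) : ℝ≥0∞ :=
  if x = ⊤ then ⊤ else ENNReal.ofReal x.toReal

/-- View an `ℝ≥0∞` number as an extended real. -/
def ennrealToEReal (x : ℝ≥0∞) : EReal :=
  if x = ⊤ then ⊤ else ((x.toReal : ℝ) : EReal)

/-- The interaction energy `E[ρ] = (1/2)∬ W(x-y) dρ(y) dρ(x)`, with values in the
extended reals, defined as the difference of the integrals of the positive and negative
parts of `W` (the potentials considered are bounded below, so the negative part is finite). -/
def interactionEnergy {d : ℕ} (W : EuclideanSpace ℝ (Fin d) → EReal)
    (ρ : Measure (EuclideanSpace ℝ (Fin d))) : EReal :=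
  (((2:ℝ)⁻¹ : ℝ) : EReal) *
    (ennrealToEReal (∫⁻ p, erealToENNReal (W (p.1 - p.2)) ∂(ρ.prod ρ))
      - ennrealToEReal (∫⁻ p, erealToENNReal (-(W (p.1 - p.2))) ∂(ρ.prod ρ)))

/-- `ρ` is a minimizer of the interaction energy among probability measures. -/
def IsEnergyMinimizer {d : ℕ} (W : EuclideanSpace ℝ (Fin d) → EReal)
    (ρ : Measure (EuclideanSpace ℝ (Fin d))) : Prop :=
  IsProbabilityMeasure ρ ∧
    ∀ ρ' : Measure (EuclideanSpace ℝ (Fin d)), IsProbabilityMeasure ρ' →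
      interactionEnergy W ρ ≤ interactionEnergy W ρ'

/-- The linear interpolation `(1-t)ρ₀ + tρ₁`. -/
def lininterp {d : ℕ} (ρ₀ ρ₁ : Measure (EuclideanSpace ℝ (Fin d))) (t : ℝ) :
    Measure (EuclideanSpace ℝ (Fin d)) :=
  ENNReal.ofReal (1 - t) • ρ₀ + ENNReal.ofReal t • ρ₁

/-- The linear interpolation convexity property of `W` holds within radius `R`:
for any two distinct probability measures of finite energy supported in `closedBall 0 R`
with center of mass `0`, the energy is strictly convex along the linear interpolation. -/
def LICWithin {d : ℕ} (W : EuclideanSpace ℝ (Fin d) → EReal) (R : ℝ) : Prop :=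
  ∀ ρ₀ ρ₁ : Measure (EuclideanSpace ℝ (Fin d)),
    IsProbabilityMeasure ρ₀ → IsProbabilityMeasure ρ₁ → ρ₀ ≠ ρ₁ →
    ρ₀ (closedBall (0 : EuclideanSpace ℝ (Fin d)) R)ᶜ = 0 →
    ρ₁ (closedBall (0 : EuclideanSpace ℝ (Fin d)) R)ᶜ = 0 →
    interactionEnergy W ρ₀ < ⊤ → interactionEnergy W ρ₁ < ⊤ →
    (∫ x, x ∂ρ₀) = 0 → (∫ x, x ∂ρ₁) = 0 →
    ∀ t₁ t₂ θ : ℝ, t₁ ∈ Icc (0:ℝ) 1 → t₂ ∈ Icc (0:ℝ) 1 → t₁ ≠ t₂ → θ ∈ Ioo (0:ℝ) 1 →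
      interactionEnergy W (lininterp ρ₀ ρ₁ (θ * t₁ + (1 - θ) * t₂)) <
        ((θ : ℝ) : EReal) * interactionEnergy W (lininterp ρ₀ ρ₁ t₁) +
          (((1 - θ) : ℝ) : EReal) * interactionEnergy W (lininterp ρ₀ ρ₁ t₂)


/-!
Translating a minimizer to center of mass `0` keeps it a minimizer, and by the size bound the
translate is supported in `closedBall 0 R_* ⊆ closedBall 0 R`. Two distinct centered minimizers
`σ₀ ≠ σ₁` would then have equal finite energy, and strict convexity along `(1-t)σ₀ + tσ₁` would
give the midpoint an energy strictly below the minimum. The minimal energy is finite because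
otherwise every probability measure, including one without compact support, would be a minimizer.
-/

section Translation

variable {F : Type*} [NormedAddCommGroup F] [MeasurableSpace F] [BorelSpace F]

lemma integrable_id_of_isCompact_of_measure_compl_eq_zero [SecondCountableTopology F]
    {μ : Measure F} [IsFiniteMeasure μ] {K : Set F} (hK : IsCompact K) (hμK : μ Kᶜ = 0) :
    Integrable (fun x : F => x) μ := by
  obtain ⟨C, hC⟩ := isBounded_iff_forall_norm_le.1 hK.isBounded
  refine Integrable.mono' (integrable_const C) aestronglyMeasurable_id ?_
  exact measure_mono_null (fun x hx hxK => hx (hC x hxK)) hμK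

lemma integral_id_map_add_const [NormedSpace ℝ F] [CompleteSpace F] [SecondCountableTopology F]
    {μ : Measure F} [IsProbabilityMeasure μ]
    (hμ : Integrable (fun x : F => x) μ) (v : F) :
    ∫ x, x ∂(μ.map (· + v)) = (∫ x, x ∂μ) + v := by
  rw [integral_map (f := fun x : F => x) (measurable_add_const v).aemeasurable
      aestronglyMeasurable_id,
    integral_add hμ (integrable_const v), integral_const, probReal_univ, one_smul]

lemma map_add_const_add (μ : Measure F) (v w : F) :
    μ.map (· + (v + w)) = (μ.map (· + v)).map (· + w) := by
  rw [Measure.map_map (measurable_add_const w) (measurable_add_const v)]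
  congr 1
  funext x
  simp [add_assoc]

lemma eq_map_add_const_of_map_add_const_eq {μ ν : Measure F} {v w : F}
    (h : μ.map (· + v) = ν.map (· + w)) : ν = μ.map (· + (v - w)) := by
  rw [sub_eq_add_neg, map_add_const_add, h, ← map_add_const_add, add_neg_cancel]
  simp

end Translation

lemma exists_isProbabilityMeasure_forall_isCompact_measure_compl_ne_zero
    {F : Type*} [NormedAddCommGroup F] [NormedSpace ℝ F] [Nontrivial F] [MeasurableSpace F] :
    ∃ μ : Measure F, IsProbabilityMeasure μ ∧ ∀ K : Set F, IsCompact K → μ Kᶜ ≠ 0 := by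
  obtain ⟨e, he⟩ := exists_norm_eq F zero_le_one
  let w : ℕ → ℝ≥0∞ := fun n => 2⁻¹ ^ (n + 1)
  refine ⟨Measure.sum fun n => w n • Measure.dirac ((n : ℝ) • e), ⟨?_⟩, ?_⟩
  · simp only [Measure.sum_apply _ MeasurableSet.univ, Measure.smul_apply, smul_eq_mul,
      measure_univ, mul_one, w, pow_succ', ENNReal.tsum_mul_left, ENNReal.tsum_geometric,
      ENNReal.one_sub_inv_two, inv_inv]
    exact ENNReal.inv_mul_cancel two_ne_zero ENNReal.ofNat_ne_top
  · intro K hK hμK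
    obtain ⟨C, hC⟩ := isBounded_iff_forall_norm_le.1 hK.isBounded
    obtain ⟨n, hn⟩ := exists_nat_gt C
    have hnK : (n : ℝ) • e ∈ Kᶜ := fun h => by
      have := hC _ h
      rw [norm_smul, he, mul_one, Real.norm_natCast] at this
      linarith
    have hle :=
      Measure.le_iff'.1 (Measure.le_sum (fun n => w n • Measure.dirac ((n : ℝ) • e)) n) Kᶜ
    rw [hμK, Measure.smul_apply, Measure.dirac_apply_of_mem hnK, smul_eq_mul, mul_one,
      nonpos_iff_eq_zero] at hle
    exact pow_ne_zero _ (ENNReal.inv_ne_zero.2 ENNReal.ofNat_ne_top) hle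

lemma EReal.coe_mul_add_coe_one_sub_mul_self {x : EReal} (hx : x ≠ ⊥) (hx' : x ≠ ⊤) (θ : ℝ) :
    (θ : EReal) * x + ((1 - θ : ℝ) : EReal) * x = x := by
  lift x to ℝ using ⟨hx', hx⟩
  rw [← EReal.coe_mul, ← EReal.coe_mul, ← EReal.coe_add]
  ring_nf

lemma measurable_erealToENNReal : Measurable erealToENNReal :=
  Measurable.ite measurableSet_eq measurable_const
    (ENNReal.measurable_ofReal.comp measurable_ereal_toReal)

lemma monotone_erealToENNReal : Monotone erealToENNReal := by
  intro x y h
  unfold erealToENNReal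
  rcases eq_or_ne y ⊤ with rfl | hy
  · simp
  rw [if_neg hy, if_neg (ne_top_of_le_ne_top hy h)]
  rcases eq_or_ne x ⊥ with rfl | hx
  · simp
  exact ENNReal.ofReal_le_ofReal (EReal.toReal_le_toReal h hx hy)

lemma erealToENNReal_coe (r : ℝ) : erealToENNReal r = ENNReal.ofReal r := by
  simp [erealToENNReal]

lemma ennrealToEReal_of_ne_top {x : ℝ≥0∞} (hx : x ≠ ⊤) : ennrealToEReal x = (x.toReal : EReal) :=
  if_neg hx

lemma ennrealToEReal_ne_bot (x : ℝ≥0∞) : ennrealToEReal x ≠ ⊥ := by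
  unfold ennrealToEReal
  split_ifs <;> simp

lemma lintegral_erealToENNReal_neg_ne_top {α : Type*} [MeasurableSpace α] {ν : Measure α}
    [IsFiniteMeasure ν] {f : α → EReal} {m : ℝ} (hm : ∀ a, (m : EReal) ≤ f a) :
    ∫⁻ a, erealToENNReal (-f a) ∂ν ≠ ⊤ := by
  have hbound : ∀ a, erealToENNReal (-f a) ≤ ENNReal.ofReal (-m) := fun a => by
    rw [← erealToENNReal_coe, EReal.coe_neg]
    exact monotone_erealToENNReal (EReal.neg_le_neg_iff.2 (hm a))
  refine ne_top_of_le_ne_top ?_ (lintegral_mono hbound)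
  simp [lintegral_const, ENNReal.mul_eq_top]

section Energy

variable {d : ℕ} {W : EuclideanSpace ℝ (Fin d) → EReal}

local notation "E" => EuclideanSpace ℝ (Fin d)

lemma interactionEnergy_ne_bot {m : ℝ} (hm : ∀ x, (m : EReal) ≤ W x)
    (μ : Measure E) [IsFiniteMeasure μ] : interactionEnergy W μ ≠ ⊥ := by
  unfold interactionEnergy
  rw [ennrealToEReal_of_ne_top (lintegral_erealToENNReal_neg_ne_top (ν := μ.prod μ)
    (f := fun p : E × E => W (p.1 - p.2)) fun p => hm (p.1 - p.2)),
    EReal.mul_ne_bot]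
  refine ⟨Or.inl (EReal.coe_ne_bot _), Or.inr ?_, Or.inl (EReal.coe_ne_top _), Or.inl ?_⟩
  · rw [sub_eq_add_neg, ← EReal.coe_neg]
    exact EReal.add_ne_bot_iff.2 ⟨ennrealToEReal_ne_bot _, EReal.coe_ne_bot _⟩
  · exact_mod_cast (by norm_num : (0 : ℝ) ≤ 2⁻¹)

lemma interactionEnergy_map_add_const (hW : Measurable W) (μ : Measure E) [SFinite μ] (v : E) :
    interactionEnergy W (μ.map (· + v)) = interactionEnergy W μ := by
  have hv : Measurable fun x : E => x + v := measurable_add_const v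
  have hlintegral : ∀ g : EReal → ℝ≥0∞, Measurable g →
      ∫⁻ p, g (W (p.1 - p.2)) ∂(μ.map (· + v)).prod (μ.map (· + v)) =
        ∫⁻ p, g (W (p.1 - p.2)) ∂μ.prod μ := fun g hg => by
    rw [Measure.map_prod_map μ μ hv hv,
      lintegral_map (f := fun p : E × E => g (W (p.1 - p.2)))
        (hg.comp (hW.comp (measurable_fst.sub measurable_snd))) (hv.prodMap hv)]
    simp [add_sub_add_right_eq_sub]
  unfold interactionEnergy
  rw [hlintegral _ measurable_erealToENNReal,
    hlintegral (fun x => erealToENNReal (-x)) (measurable_erealToENNReal.comp measurable_neg)]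

@[simp]
lemma lininterp_zero (ρ₀ ρ₁ : Measure E) : lininterp ρ₀ ρ₁ 0 = ρ₀ := by
  simp [lininterp]

@[simp]
lemma lininterp_one (ρ₀ ρ₁ : Measure E) : lininterp ρ₀ ρ₁ 1 = ρ₁ := by
  simp [lininterp]

lemma isProbabilityMeasure_lininterp (ρ₀ ρ₁ : Measure E) [IsProbabilityMeasure ρ₀]
    [IsProbabilityMeasure ρ₁] {t : ℝ} (ht : t ∈ Icc (0 : ℝ) 1) :
    IsProbabilityMeasure (lininterp ρ₀ ρ₁ t) := by
  constructor
  simp only [lininterp, Measure.add_apply, Measure.smul_apply, smul_eq_mul, measure_univ, mul_one]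
  rw [← ENNReal.ofReal_add (by linarith [ht.2]) ht.1]
  simp

lemma IsEnergyMinimizer.map_add_const {ρ : Measure E} (hρ : IsEnergyMinimizer W ρ)
    (hW : Measurable W) (v : E) : IsEnergyMinimizer W (ρ.map (· + v)) := by
  have := hρ.1
  refine ⟨Measure.isProbabilityMeasure_map (measurable_add_const v).aemeasurable, fun ρ' hρ' => ?_⟩
  rw [interactionEnergy_map_add_const hW]
  exact hρ.2 ρ' hρ'

lemma IsEnergyMinimizer.centered {ρ : Measure E} (hρ : IsEnergyMinimizer W ρ) (hW : Measurable W)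
    {K : Set E} (hK : IsCompact K) (hρK : ρ Kᶜ = 0) :
    IsEnergyMinimizer W (ρ.map (· + -∫ x, x ∂ρ)) ∧ ∫ x, x ∂(ρ.map (· + -∫ x, x ∂ρ)) = 0 := by
  have := hρ.1
  refine ⟨hρ.map_add_const hW _, ?_⟩
  rw [integral_id_map_add_const (integrable_id_of_isCompact_of_measure_compl_eq_zero hK hρK),
    add_neg_cancel]

lemma IsEnergyMinimizer.interactionEnergy_lt_top {ρ μ : Measure E} (hρ : IsEnergyMinimizer W ρ)
    [IsProbabilityMeasure μ] (hμ : ¬ IsEnergyMinimizer W μ) : interactionEnergy W ρ < ⊤ := by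
  refine lt_top_iff_ne_top.2 fun htop => hμ ⟨‹_›, fun ρ' hρ' => ?_⟩
  have hρ' := hρ.2 ρ' hρ'
  rw [htop, top_le_iff] at hρ'
  exact hρ' ▸ le_top

lemma IsEnergyMinimizer.eq_of_licWithin {R m : ℝ} (hLIC : LICWithin W R)
    (hm : ∀ x, (m : EReal) ≤ W x) {σ₀ σ₁ : Measure E}
    (h₀ : IsEnergyMinimizer W σ₀) (h₁ : IsEnergyMinimizer W σ₁)
    (hfin : interactionEnergy W σ₀ < ⊤)
    (hsupp₀ : σ₀ (closedBall 0 R)ᶜ = 0) (hsupp₁ : σ₁ (closedBall 0 R)ᶜ = 0)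
    (hc₀ : ∫ x, x ∂σ₀ = 0) (hc₁ : ∫ x, x ∂σ₁ = 0) : σ₀ = σ₁ := by
  have := h₀.1
  have := h₁.1
  by_contra hne
  have hE : interactionEnergy W σ₁ = interactionEnergy W σ₀ :=
    le_antisymm (h₁.2 σ₀ h₀.1) (h₀.2 σ₁ h₁.1)
  have hstrict := hLIC σ₀ σ₁ h₀.1 h₁.1 hne hsupp₀ hsupp₁ hfin (hE ▸ hfin) hc₀ hc₁ 0 1 2⁻¹
    (left_mem_Icc.2 zero_le_one) (right_mem_Icc.2 zero_le_one) zero_ne_one (by norm_num)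
  have hmid := h₀.2 _ (isProbabilityMeasure_lininterp σ₀ σ₁ (t := 2⁻¹) (by norm_num))
  rw [show (2⁻¹ : ℝ) * 0 + (1 - 2⁻¹) * 1 = 2⁻¹ by norm_num, lininterp_zero, lininterp_one, hE,
    EReal.coe_mul_add_coe_one_sub_mul_self (interactionEnergy_ne_bot hm σ₀) hfin.ne] at hstrict
  exact (hmid.trans_lt hstrict).false

end Energy

theorem uniqueness_of_minimizer_from_LIC_radius_general
    {d : ℕ} (hd : 0 < d) (W : EuclideanSpace ℝ (Fin d) → EReal)
    (hlsc : LowerSemicontinuous W)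
    (hbdd : ∃ m : ℝ, ∀ x, (m : EReal) ≤ W x)
    (Rstar : ℝ)
    (hcompact : ∀ ρ : Measure (EuclideanSpace ℝ (Fin d)), IsEnergyMinimizer W ρ →
      ∃ K : Set (EuclideanSpace ℝ (Fin d)), IsCompact K ∧ ρ Kᶜ = 0)
    (hsize : ∀ ρ : Measure (EuclideanSpace ℝ (Fin d)), IsEnergyMinimizer W ρ →
      (∫ x, x ∂ρ) = 0 → ρ (closedBall (0 : EuclideanSpace ℝ (Fin d)) Rstar)ᶜ = 0)
    (R : ℝ) (hRR : Rstar < R) (hLIC : LICWithin W R) :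
    ∀ ρ₀ ρ₁ : Measure (EuclideanSpace ℝ (Fin d)),
      IsEnergyMinimizer W ρ₀ → IsEnergyMinimizer W ρ₁ →
      ∃ v : EuclideanSpace ℝ (Fin d), ρ₁ = ρ₀.map (fun x => x + v) := by
  intro ρ₀ ρ₁ h₀ h₁
  obtain ⟨m, hm⟩ := hbdd
  have hW : Measurable W := hlsc.measurable
  have : Nonempty (Fin d) := ⟨⟨0, hd⟩⟩
  obtain ⟨μ, hμ, hμK⟩ := exists_isProbabilityMeasure_forall_isCompact_measure_compl_ne_zero
    (F := EuclideanSpace ℝ (Fin d))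
  have hμ_not : ¬ IsEnergyMinimizer W μ := fun h => by
    obtain ⟨K, hK, hμK'⟩ := hcompact μ h
    exact hμK K hK hμK'
  have hball : ∀ σ, IsEnergyMinimizer W σ → ∫ x, x ∂σ = 0 → σ (closedBall 0 R)ᶜ = 0 :=
    fun σ hσ hc => measure_mono_null (compl_subset_compl.2 (closedBall_subset_closedBall hRR.le))
      (hsize σ hσ hc)
  obtain ⟨K₀, hK₀, hρK₀⟩ := hcompact ρ₀ h₀
  obtain ⟨K₁, hK₁, hρK₁⟩ := hcompact ρ₁ h₁
  obtain ⟨hσ₀, hc₀⟩ := h₀.centered hW hK₀ hρK₀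
  obtain ⟨hσ₁, hc₁⟩ := h₁.centered hW hK₁ hρK₁
  exact ⟨_, eq_map_add_const_of_map_add_const_eq <| hσ₀.eq_of_licWithin hLIC hm hσ₁
    (hσ₀.interactionEnergy_lt_top hμ_not) (hball _ hσ₀ hc₀) (hball _ hσ₁ hc₁) hc₀ hc₁⟩

/-- If `R_*` is an upper bound of minimizer size for `W` and the LIC radius of `W`
exceeds `R_*` (witnessed by some `R > R_*` at which the LIC property within radius `R`
holds), then the energy minimizer is unique up to translation. -/
theorem uniqueness_of_minimizer_from_LIC_radius
    {d : ℕ} (hd : 0 < d) (W : EuclideanSpace ℝ (Fin d) → EReal)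
    (heven : ∀ x, W (-x) = W x)
    (hlsc : LowerSemicontinuous W)
    (hbdd : ∃ m : ℝ, ∀ x, (m : EReal) ≤ W x)
    (hloc : LocallyIntegrable (fun x => (W x).toReal) volume)
    (Winf : EReal) (hWinfbot : Winf ≠ ⊥)
    (hWlim : Tendsto W (Bornology.cobounded (EuclideanSpace ℝ (Fin d))) (nhds Winf))
    (hexists : ∃ ρ : Measure (EuclideanSpace ℝ (Fin d)), IsEnergyMinimizer W ρ)
    (Rstar : ℝ) (hRstar : 0 < Rstar)
    (hcompact : ∀ ρ : Measure (EuclideanSpace ℝ (Fin d)), IsEnergyMinimizer W ρ →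
      ∃ K : Set (EuclideanSpace ℝ (Fin d)), IsCompact K ∧ ρ Kᶜ = 0)
    (hsize : ∀ ρ : Measure (EuclideanSpace ℝ (Fin d)), IsEnergyMinimizer W ρ →
      (∫ x, x ∂ρ) = 0 → ρ (closedBall (0 : EuclideanSpace ℝ (Fin d)) Rstar)ᶜ = 0)
    (R : ℝ) (hRR : Rstar < R) (hLIC : LICWithin W R) :
    ∀ ρ₀ ρ₁ : Measure (EuclideanSpace ℝ (Fin d)),
      IsEnergyMinimizer W ρ₀ → IsEnergyMinimizer W ρ₁ →
      ∃ v : EuclideanSpace ℝ (Fin d), ρ₁ = ρ₀.map (fun x => x + v) :=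
  uniqueness_of_minimizer_from_LIC_radius_general hd W hlsc hbdd Rstar hcompact hsize R hRR hLIC
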